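/- arXiv:1407.8261 — 3 statements merged into one kernel-verified Lean document; each statement's English description precedes it below -/
import Mathlib

section
/- For any atoms a and b, the class Av(a·(arch over b)) is Wilf-equivalent to Av(arch over (ba)). -/
/-- Plane forests, modelling non-crossing arch systems: `node c r` is an atom
(an arch over the contents `c`) followed by the rest of the forest `r`. -/
inductive PF : Type
  | nil : PF
  | node : PF → PF → PF
  deriving DecidableEq

namespace PF

/-- number of arches (nodes) -/
def size : PF → ℕ
  | nil => 0
  | node c r => 1 + c.size + r.size

/-- concatenation of arch systems -/
def append : PF → PF → PF
  | nil, q => q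
  | node c r, q => node c (r.append q)

instance : Append PF := ⟨PF.append⟩

/-- an atom: a nonempty arch system with a single outermost arch -/
def IsAtom (a : PF) : Prop := ∃ c, a = node c nil

/-- an atom or the empty arch system -/
def AtomOrNil (a : PF) : Prop := a = nil ∨ IsAtom a

/-- One-step arch deletion: `Del X Y` means `Y` is obtained from `X` by deleting one arch
(the contents of a deleted arch are spliced in its place). -/
inductive Del : PF → PF → Prop
  | root (c r : PF) : Del (node c r) (c ++ r)
  | inside {c c' : PF} (r : PF) : Del c c' → Del (node c r) (node c' r)
  | rest {r r' : PF} (c : PF) : Del r r' → Del (node c r) (node c r')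

/-- `Contains X A` : `A` is a substructure (subsystem) of `X`. -/
def Contains (X A : PF) : Prop := Relation.ReflTransGen Del X A

/-- the class of arch systems avoiding `A` -/
def Av (A : PF) : Set PF := {X | ¬ Contains X A}

/-- Wilf-equivalence: same counting sequence by number of arches. -/
def WilfEq (A B : PF) : Prop :=
  ∀ n, Set.ncard {X | X ∈ Av A ∧ X.size = n} = Set.ncard {X | X ∈ Av B ∧ X.size = n}

/-- the generating function of `Av A`, counting by number of arches -/
noncomputable def F (A : PF) : PowerSeries ℚ :=
  PowerSeries.mk fun n => (Set.ncard {X | X ∈ Av A ∧ X.size = n} : ℚ)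

end PF

/-- concatenation of a list of arch systems -/
def concatList (L : List PF) : PF := L.foldr (· ++ ·) PF.nil

/-- The equivalence relation `∼` whose classes are cohorts: the finest equivalence
relation satisfying the four closure rules. -/
inductive Sim : PF → PF → Prop
  | refl (A : PF) : Sim A A
  | symm {A B : PF} : Sim A B → Sim B A
  | trans {A B C : PF} : Sim A B → Sim B C → Sim A C
  | arch {A B : PF} : Sim A B → Sim (PF.node A PF.nil) (PF.node B PF.nil)
  | subst {a b : PF} (P Q : PF) : PF.AtomOrNil a → PF.AtomOrNil b → Sim a b →
      Sim (P ++ a ++ Q) (P ++ b ++ Q)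
  | comm {a b : PF} (P Q : PF) : PF.AtomOrNil a → PF.AtomOrNil b →
      Sim (P ++ a ++ b ++ Q) (P ++ b ++ a ++ Q)
  | rot {a b c : PF} : PF.AtomOrNil a → PF.AtomOrNil b → PF.AtomOrNil c →
      Sim (a ++ PF.node (b ++ c) PF.nil) (PF.node (a ++ b) PF.nil ++ c)

/-- the nest of `n` nested arches -/
def nest : ℕ → PF
  | 0 => PF.nil
  | n + 1 => PF.node (nest n) PF.nil

/-- the `n`-th Motzkin number -/
def motzkin (n : ℕ) : ℕ := ∑ k ∈ Finset.range (n + 1), n.choose (2 * k) * catalan k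

/-- the truncated continued fractions `C_n` of the Catalan generating function -/
noncomputable def Cfun : ℕ → PowerSeries ℚ
  | 0 => 1
  | n + 1 => (1 - PowerSeries.X * Cfun n)⁻¹

/-- a balanced parenthesis word (Dyck word): `true` = opening, `false` = closing -/
def BalancedW (w : List Bool) : Prop :=
  w.count true = w.count false ∧ ∀ p : List Bool, p <+: w → p.count false ≤ p.count true

/-- the height of a Dyck path -/
def wheight (w : List Bool) : ℕ :=
  (w.inits.map fun p => p.count true - p.count false).foldr max 0

/-- One-step deletion of a matched pair of parentheses (an arch) in a word. -/
inductive WDel : List Bool → List Bool → Prop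
  | mk (x y z : List Bool) : BalancedW y →
      WDel (x ++ [true] ++ y ++ [false] ++ z) (x ++ y ++ z)

/-- `l` avoids the pattern 231 -/
def Avoids231 (l : List ℕ) : Prop := ¬ ∃ a b c : ℕ, [b, c, a].Sublist l ∧ a < b ∧ b < c

/-- `p` and `s` are order-isomorphic sequences -/
def OrdIso (p s : List ℕ) : Prop :=
  p.length = s.length ∧ ∀ i j : ℕ, i < p.length → j < p.length →
    (p.getD i 0 < p.getD j 0 ↔ s.getD i 0 < s.getD j 0)

/-! Split an arch system `node C R` at its first arch. It avoids an arch over `Q` iff `C` avoids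
`Q` and `R` avoids the arch over `Q`; it avoids the pair `W = (arch γ)(arch δ)` iff either `C`
avoids `γ` and `R` avoids `W`, or `C` contains `γ` but avoids `W` and `R` avoids the arch over
`δ`. These are disjoint unions of products, so the generating functions satisfy
`F(arch Q) (1 - x F Q) = 1` and `F W (1 - x F γ - x F(arch δ)) = 1 - x F γ F(arch δ)`.
For `a = arch c` and `b` empty or `b = arch d`, these equations determine both generating
functions as the same rational function of `F c` and `F d`. -/

namespace PF

@[simp] lemma nil_append (q : PF) : nil ++ q = q := rfl

@[simp] lemma node_append (c r q : PF) : node c r ++ q = node c (r ++ q) := rfl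

@[simp] lemma append_nil (p : PF) : p ++ nil = p := by
  induction p with
  | nil => rfl
  | node c r _ ih => rw [node_append, ih]

lemma append_assoc (p q r : PF) : p ++ q ++ r = p ++ (q ++ r) := by
  induction p with
  | nil => rfl
  | node c t _ ih => rw [node_append, node_append, node_append, ih]

lemma append_eq_node_nil_iff {p q c : PF} :
    p ++ q = node c nil ↔ p = nil ∧ q = node c nil ∨ p = node c nil ∧ q = nil := by
  cases p with
  | nil => simp
  | node x y => cases y <;> cases q <;> simp

lemma node_injective2 : Function.Injective2 node := fun _ _ _ _ h => node.inj h

lemma Del.append_left {c c' : PF} (h : Del c c') (r : PF) : Del (c ++ r) (c' ++ r) := by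
  induction h with
  | root x y => rw [node_append, append_assoc]; exact Del.root x (y ++ r)
  | inside y h _ => exact Del.inside _ h
  | rest x _ ih => exact Del.rest x ih

lemma Del.append_right (c : PF) {r r' : PF} (h : Del r r') : Del (c ++ r) (c ++ r') := by
  induction c with
  | nil => exact h
  | node x _ _ ih => exact Del.rest x ih

lemma Del.of_append {p q Z : PF} (h : Del (p ++ q) Z) :
    (∃ p', Del p p' ∧ Z = p' ++ q) ∨ ∃ q', Del q q' ∧ Z = p ++ q' := by
  induction p generalizing Z with
  | nil => exact Or.inr ⟨Z, h, rfl⟩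
  | node c r _ ih =>
    cases h with
    | root => exact Or.inl ⟨c ++ r, Del.root c r, (append_assoc c r q).symm⟩
    | inside _ h => exact Or.inl ⟨_, Del.inside r h, rfl⟩
    | rest _ h =>
      rcases ih h with ⟨r', hr, rfl⟩ | ⟨q', hq, rfl⟩
      · exact Or.inl ⟨node c r', Del.rest c hr, rfl⟩
      · exact Or.inr ⟨q', hq, rfl⟩

lemma Contains.refl (X : PF) : Contains X X := Relation.ReflTransGen.refl

lemma Contains.trans {X Y Z : PF} (h : Contains X Y) (h' : Contains Y Z) : Contains X Z :=
  Relation.ReflTransGen.trans h h'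

lemma Contains.head {X Y Z : PF} (h : Del X Y) (h' : Contains Y Z) : Contains X Z :=
  Relation.ReflTransGen.head h h'

lemma Contains.append {X Y P Q : PF} (hX : Contains X P) (hY : Contains Y Q) :
    Contains (X ++ Y) (P ++ Q) :=
  (hX.lift (· ++ Y) fun _ _ h => h.append_left Y).trans
    (hY.lift (P ++ ·) fun _ _ h => h.append_right P)

lemma Contains.node {C R P Q : PF} (hC : Contains C P) (hR : Contains R Q) :
    Contains (node C R) (node P Q) :=
  (hC.lift (PF.node · R) fun _ _ h => Del.inside R h).trans
    (hR.lift (PF.node P ·) fun _ _ h => Del.rest P h)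

lemma contains_nil (X : PF) : Contains X nil := by
  induction X with
  | nil => exact Contains.refl nil
  | node c r hc hr => exact Contains.head (Del.root c r) (hc.append hr)

lemma eq_nil_of_nil_contains {P : PF} (h : Contains nil P) : P = nil := by
  rcases Relation.ReflTransGen.cases_head h with h | ⟨_, h, _⟩
  · exact h.symm
  · cases h

lemma node_nil_contains (P : PF) : Contains (node P nil) P :=
  Contains.head (Del.root P nil) (by rw [append_nil]; exact Contains.refl P)

lemma contains_node_iff {C R P : PF} : Contains (node C R) P ↔
    Contains (C ++ R) P ∨ ∃ P₁ P₂, P = node P₁ P₂ ∧ Contains C P₁ ∧ Contains R P₂ := by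
  refine ⟨fun h => ?_, ?_⟩
  · generalize hZ : node C R = Z at h
    induction h using Relation.ReflTransGen.head_induction_on generalizing C R with
    | refl => subst hZ; exact Or.inr ⟨C, R, rfl, Contains.refl C, Contains.refl R⟩
    | head hd _ ih =>
      subst hZ
      cases hd with
      | root => exact Or.inl ‹_›
      | inside _ hd =>
        rcases ih rfl with h | ⟨P₁, P₂, rfl, h₁, h₂⟩
        · exact Or.inl (((Contains.head hd (Contains.refl _)).append (Contains.refl R)).trans h)
        · exact Or.inr ⟨P₁, P₂, rfl, Contains.head hd h₁, h₂⟩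
      | rest _ hd =>
        rcases ih rfl with h | ⟨P₁, P₂, rfl, h₁, h₂⟩
        · exact Or.inl (((Contains.refl C).append (Contains.head hd (Contains.refl _))).trans h)
        · exact Or.inr ⟨P₁, P₂, rfl, h₁, Contains.head hd h₂⟩
  · rintro (h | ⟨P₁, P₂, rfl, h₁, h₂⟩)
    · exact Contains.head (Del.root C R) h
    · exact h₁.node h₂

lemma contains_append_iff {X Y P : PF} :
    Contains (X ++ Y) P ↔ ∃ P₁ P₂, P = P₁ ++ P₂ ∧ Contains X P₁ ∧ Contains Y P₂ := by
  refine ⟨fun h => ?_, ?_⟩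
  · generalize hZ : X ++ Y = Z at h
    induction h using Relation.ReflTransGen.head_induction_on generalizing X Y with
    | refl => subst hZ; exact ⟨X, Y, rfl, Contains.refl X, Contains.refl Y⟩
    | head hd _ ih =>
      subst hZ
      rcases Del.of_append hd with ⟨X', hX, rfl⟩ | ⟨Y', hY, rfl⟩
      · obtain ⟨P₁, P₂, rfl, h₁, h₂⟩ := ih rfl
        exact ⟨P₁, P₂, rfl, Contains.head hX h₁, h₂⟩
      · obtain ⟨P₁, P₂, rfl, h₁, h₂⟩ := ih rfl
        exact ⟨P₁, P₂, rfl, h₁, Contains.head hY h₂⟩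
  · rintro ⟨P₁, P₂, rfl, h₁, h₂⟩
    exact h₁.append h₂

lemma contains_append_node_nil_iff {X Y Q : PF} :
    Contains (X ++ Y) (node Q nil) ↔ Contains X (node Q nil) ∨ Contains Y (node Q nil) := by
  rw [contains_append_iff]
  constructor
  · rintro ⟨P₁, P₂, he, h₁, h₂⟩
    rcases append_eq_node_nil_iff.1 he.symm with ⟨rfl, rfl⟩ | ⟨rfl, rfl⟩
    · exact Or.inr h₂
    · exact Or.inl h₁
  · rintro (h | h)
    · exact ⟨node Q nil, nil, (append_nil _).symm, h, contains_nil Y⟩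
    · exact ⟨nil, node Q nil, rfl, contains_nil X, h⟩

lemma contains_node_node_nil_iff {C R Q : PF} :
    Contains (node C R) (node Q nil) ↔ Contains C Q ∨ Contains R (node Q nil) := by
  rw [contains_node_iff, contains_append_node_nil_iff]
  constructor
  · rintro ((h | h) | ⟨P₁, P₂, he, h₁, -⟩)
    · exact Or.inl (h.trans (node_nil_contains Q))
    · exact Or.inr h
    · cases he
      exact Or.inl h₁
  · rintro (h | h)
    · exact Or.inr ⟨Q, nil, rfl, h, contains_nil R⟩
    · exact Or.inl (Or.inr h)

/- The *pair* `node γ (node δ nil)` is an arch over `γ` followed by an arch over `δ`. -/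

lemma contains_append_pair_iff {X Y γ δ : PF} :
    Contains (X ++ Y) (node γ (node δ nil)) ↔
      Contains X (node γ (node δ nil)) ∨ Contains Y (node γ (node δ nil)) ∨
        Contains X (node γ nil) ∧ Contains Y (node δ nil) := by
  rw [contains_append_iff]
  constructor
  · rintro ⟨(_ | ⟨x, y⟩), P₂, he, h₁, h₂⟩
    · obtain rfl : _ = P₂ := he
      exact Or.inr (Or.inl h₂)
    · simp only [node_append, node.injEq] at he
      obtain ⟨rfl, he⟩ := he
      rcases append_eq_node_nil_iff.1 he.symm with ⟨rfl, rfl⟩ | ⟨rfl, rfl⟩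
      · exact Or.inr (Or.inr ⟨h₁, h₂⟩)
      · exact Or.inl h₁
  · rintro (h | h | ⟨h₁, h₂⟩)
    · exact ⟨_, nil, (append_nil _).symm, h, contains_nil Y⟩
    · exact ⟨nil, _, rfl, contains_nil X, h⟩
    · exact ⟨_, _, rfl, h₁, h₂⟩

lemma contains_node_pair_iff {C R γ δ : PF} :
    Contains (node C R) (node γ (node δ nil)) ↔
      Contains C (node γ (node δ nil)) ∨ Contains R (node γ (node δ nil)) ∨
        Contains C γ ∧ Contains R (node δ nil) := by
  rw [contains_node_iff, contains_append_pair_iff]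
  constructor
  · rintro ((h | h | ⟨h₁, h₂⟩) | ⟨P₁, P₂, he, h₁, h₂⟩)
    · exact Or.inl h
    · exact Or.inr (Or.inl h)
    · exact Or.inr (Or.inr ⟨h₁.trans (node_nil_contains γ), h₂⟩)
    · cases he
      exact Or.inr (Or.inr ⟨h₁, h₂⟩)
  · rintro (h | h | ⟨h₁, h₂⟩)
    · exact Or.inl (Or.inl h)
    · exact Or.inl (Or.inr (Or.inl h))
    · exact Or.inr ⟨_, _, rfl, h₁, h₂⟩

lemma pair_contains_left (γ δ : PF) : Contains (node γ (node δ nil)) γ :=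
  ((Contains.refl γ).node (contains_nil _)).trans (node_nil_contains γ)

lemma pair_contains_right (γ δ : PF) : Contains (node γ (node δ nil)) (node δ nil) :=
  Contains.head (Del.root _ _) ((contains_nil γ).append (Contains.refl _))

open Set

lemma nil_mem_av {A : PF} (hA : A ≠ nil) : nil ∈ Av A :=
  fun h => hA (eq_nil_of_nil_contains h)

lemma av_nil : Av nil = ∅ :=
  eq_empty_of_forall_notMem fun X h => h (contains_nil X)

lemma node_mem_image2_node {C R : PF} {S T : Set PF} :
    node C R ∈ image2 node S T ↔ C ∈ S ∧ R ∈ T :=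
  mem_image2_iff node_injective2

lemma disjoint_singleton_nil_image2_node (S T : Set PF) : Disjoint {nil} (image2 node S T) :=
  disjoint_singleton_left.2 fun ⟨_, _, _, _, h⟩ => PF.noConfusion h

lemma disjoint_image2_node {S S' : Set PF} (h : Disjoint S S') (T T' : Set PF) :
    Disjoint (image2 node S T) (image2 node S' T') := by
  rw [disjoint_left]
  rintro _ ⟨C, hC, R, -, rfl⟩ h'
  exact disjoint_left.1 h hC (node_mem_image2_node.1 h').1

lemma av_node_nil (Q : PF) : Av (node Q nil) = {nil} ∪ image2 node (Av Q) (Av (node Q nil)) := by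
  ext (_ | ⟨C, R⟩)
  · simp [nil_mem_av]
  · simp [Av, contains_node_node_nil_iff]

lemma av_pair (γ δ : PF) : Av (node γ (node δ nil)) =
    {nil} ∪ image2 node (Av γ) (Av (node γ (node δ nil))) ∪
      image2 node (Av (node γ (node δ nil)) \ Av γ) (Av (node δ nil)) := by
  ext (_ | ⟨C, R⟩)
  · simp [nil_mem_av]
  · have hγ : Contains C (node γ (node δ nil)) → Contains C γ :=
      (·.trans (pair_contains_left γ δ))
    have hδ : Contains R (node γ (node δ nil)) → Contains R (node δ nil) :=
      (·.trans (pair_contains_right γ δ))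
    simp only [Av, mem_union, mem_singleton_iff, node_mem_image2_node, mem_sdiff, mem_ofPred_eq,
      contains_node_pair_iff, reduceCtorEq, false_or]
    tauto

lemma finite_setOf_size_le (n : ℕ) : {X : PF | X.size ≤ n}.Finite := by
  induction n with
  | zero =>
    refine (finite_singleton nil).subset ?_
    rintro (_ | ⟨C, R⟩) h
    · rfl
    · simp [size] at h
  | succ n ih =>
    refine ((finite_singleton nil).union (ih.image2 node ih)).subset ?_
    rintro (_ | ⟨C, R⟩) h
    · exact Or.inl rfl
    · simp only [size, mem_ofPred_eq] at h
      exact Or.inr (node_mem_image2_node.2 ⟨show C.size ≤ n by omega, show R.size ≤ n by omega⟩)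

lemma finite_sep_size_eq (S : Set PF) (n : ℕ) : {X ∈ S | X.size = n}.Finite :=
  (finite_setOf_size_le n).subset fun _ h => h.2.le

noncomputable def gf (S : Set PF) : PowerSeries ℚ :=
  PowerSeries.mk fun n => ({X ∈ S | X.size = n}.ncard : ℚ)

lemma F_eq_gf (A : PF) : F A = gf (Av A) := rfl

lemma coeff_gf (S : Set PF) (n : ℕ) :
    PowerSeries.coeff n (gf S) = ({X ∈ S | X.size = n}.ncard : ℚ) :=
  PowerSeries.coeff_mk _ _

lemma gf_union {S T : Set PF} (h : Disjoint S T) : gf (S ∪ T) = gf S + gf T := by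
  ext n
  have hsep : {X ∈ S ∪ T | X.size = n} = {X ∈ S | X.size = n} ∪ {X ∈ T | X.size = n} := sep_union
  rw [map_add, coeff_gf, coeff_gf, coeff_gf, hsep,
    ncard_union_eq (h.mono (sep_subset _ _) (sep_subset _ _)) (finite_sep_size_eq S n)
      (finite_sep_size_eq T n), Nat.cast_add]

lemma gf_diff {S T : Set PF} (h : T ⊆ S) : gf (S \ T) = gf S - gf T := by
  rw [eq_sub_iff_add_eq, ← gf_union disjoint_sdiff_left, sdiff_union_of_subset h]

lemma gf_empty : gf ∅ = 0 := by
  ext n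
  simp [coeff_gf]

lemma gf_singleton_nil : gf {nil} = 1 := by
  ext n
  rw [coeff_gf, PowerSeries.coeff_one]
  rcases n with _ | n
  · rw [show {X ∈ ({nil} : Set PF) | X.size = 0} = {nil} by ext (_ | _) <;> simp [size]]
    simp
  · rw [show {X ∈ ({nil} : Set PF) | X.size = n + 1} = ∅ by ext (_ | _) <;> simp [size]]
    simp

lemma ncard_image2_node (S T : Set PF) : (image2 node S T).ncard = S.ncard * T.ncard := by
  rw [← image_uncurry_prod, ncard_image_of_injective _ node_injective2.uncurry, ncard_prod]

lemma sep_image2_node_size_succ (S T : Set PF) (m : ℕ) :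
    {X ∈ image2 node S T | X.size = m + 1} =
      ⋃ p ∈ (Finset.HasAntidiagonal.antidiagonal m : Set (ℕ × ℕ)),
        image2 node {C ∈ S | C.size = p.1} {R ∈ T | R.size = p.2} := by
  ext (_ | ⟨C, R⟩)
  · simp
  · simp only [mem_sep_iff, node_mem_image2_node, size, mem_iUnion, Finset.mem_coe,
      Finset.HasAntidiagonal.mem_antidiagonal, exists_prop, Prod.exists]
    constructor
    · rintro ⟨⟨hC, hR⟩, hs⟩
      exact ⟨C.size, R.size, by omega, ⟨hC, rfl⟩, hR, rfl⟩
    · rintro ⟨_, _, hm, ⟨hC, rfl⟩, hR, rfl⟩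
      exact ⟨⟨hC, hR⟩, by omega⟩

lemma gf_image2_node (S T : Set PF) :
    gf (image2 node S T) = PowerSeries.X * (gf S * gf T) := by
  ext n
  rcases n with _ | m
  · rw [coeff_gf, PowerSeries.coeff_zero_X_mul, Nat.cast_eq_zero,
      ncard_eq_zero (finite_sep_size_eq _ _)]
    ext (_ | _) <;> simp [size]
  have hdisj : (Finset.HasAntidiagonal.antidiagonal m : Set (ℕ × ℕ)).PairwiseDisjoint
      fun p => image2 node {C ∈ S | C.size = p.1} {R ∈ T | R.size = p.2} := by
    intro p _ q _ hpq
    rw [Function.onFun, disjoint_left]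
    rintro _ ⟨C, ⟨-, hp₁⟩, R, ⟨-, hp₂⟩, rfl⟩ h
    obtain ⟨⟨-, hq₁⟩, -, hq₂⟩ := node_mem_image2_node.1 h
    exact hpq (Prod.ext (hp₁.symm.trans hq₁) (hp₂.symm.trans hq₂))
  rw [coeff_gf, PowerSeries.coeff_succ_X_mul, PowerSeries.coeff_mul, sep_image2_node_size_succ,
    (Finset.finite_toSet _).ncard_biUnion
      (fun p _ => (finite_sep_size_eq S p.1).image2 node (finite_sep_size_eq T p.2)) hdisj,
    finsum_mem_coe_finset, Nat.cast_sum]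
  refine Finset.sum_congr rfl fun p _ => ?_
  rw [coeff_gf, coeff_gf, ncard_image2_node, Nat.cast_mul]

lemma av_subset_av {A B : PF} (h : Contains A B) : Av B ⊆ Av A :=
  fun _ hX hA => hX (hA.trans h)

open PowerSeries

lemma F_nil : F nil = 0 := by
  rw [F_eq_gf, av_nil, gf_empty]

lemma F_node_nil_mul (Q : PF) : F (node Q nil) * (1 - X * F Q) = 1 := by
  have h := congrArg gf (av_node_nil Q)
  rw [gf_union (disjoint_singleton_nil_image2_node _ _), gf_singleton_nil, gf_image2_node] at h
  simp only [← F_eq_gf] at h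
  linear_combination h

lemma F_pair_mul (γ δ : PF) :
    F (node γ (node δ nil)) * (1 - X * F γ - X * F (node δ nil)) =
      1 - X * F γ * F (node δ nil) := by
  have h := congrArg gf (av_pair γ δ)
  rw [gf_union (disjoint_union_left.2 ⟨disjoint_singleton_nil_image2_node _ _,
      disjoint_image2_node disjoint_sdiff_right _ _⟩),
    gf_union (disjoint_singleton_nil_image2_node _ _), gf_singleton_nil, gf_image2_node,
    gf_image2_node, gf_diff (av_subset_av (pair_contains_left γ δ))] at h
  simp only [← F_eq_gf] at h
  linear_combination h

lemma F_node_nil_nil : F (node nil nil) = 1 := by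
  simpa [F_nil] using F_node_nil_mul nil

lemma F_arch_switch_nil (c : PF) : F (node c (node nil nil)) = F (node (node c nil) nil) := by
  have hr := F_node_nil_mul c
  have hp₁ := F_pair_mul c nil
  have hp₂ := F_node_nil_mul (node c nil)
  rw [F_node_nil_nil] at hp₁
  set f := F c
  set p₂ := F (node (node c nil) nil)
  have hD : (1 - X * f - X : PowerSeries ℚ) ≠ 0 := fun h => by
    simpa using congrArg constantCoeff h
  refine mul_right_cancel₀ hD ?_
  linear_combination hp₁ - (1 - X * f) * hp₂ - X * p₂ * hr

lemma F_arch_switch_atom (c d : PF) :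
    F (node c (node (node d nil) nil)) = F (node (node d (node c nil)) nil) := by
  have hr := F_node_nil_mul c
  have hβ := F_node_nil_mul d
  have ht := F_node_nil_mul (node d nil)
  have hq := F_pair_mul d c
  have hp₁ := F_pair_mul c (node d nil)
  have hp₂ := F_node_nil_mul (node d (node c nil))
  set f := F c
  set e := F d
  set t := F (node (node d nil) nil)
  set q := F (node d (node c nil))
  set p₁ := F (node c (node (node d nil) nil))
  set p₂ := F (node (node d (node c nil)) nil)
  set N : PowerSeries ℚ := (1 - X * e) * (1 - X * f) - X
  set D : PowerSeries ℚ := (1 - X * e) * (1 - X * f) - X * (1 - X * f) - X * (1 - X * e)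
  have ht' : t * (1 - X * e - X) = 1 - X * e := by
    linear_combination (1 - X * e) * ht + X * t * hβ
  have hq' : q * N = 1 - X * f - X * e := by
    linear_combination (1 - X * f) * hq + X * (q - e) * hr
  have hp₁' : p₁ * D = N := by
    linear_combination (1 - X * e - X) * hp₁ + X * (p₁ - f) * ht'
  have hp₂' : p₂ * D = N := by
    linear_combination N * hp₂ + X * p₂ * hq'
  have hD : D ≠ 0 := fun h => by
    simpa [D, N] using congrArg constantCoeff h
  exact mul_right_cancel₀ hD (hp₁'.trans hp₂'.symm)

lemma wilfEq_of_F_eq {A B : PF} (h : F A = F B) : WilfEq A B := fun n => by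
  have h := congrArg (coeff n) h
  rwa [F_eq_gf, F_eq_gf, coeff_gf, coeff_gf, Nat.cast_inj] at h

end PF

/-- For any atoms `a` and `b` (possibly empty), `Av(a·(arch over b))` is
Wilf-equivalent to `Av(arch over (ba))`. -/
theorem wilfEq_arch_switch (a b : PF) (ha : a.AtomOrNil) (hb : b.AtomOrNil) :
    PF.WilfEq (a ++ PF.node b PF.nil) (PF.node (b ++ a) PF.nil) := by
  apply PF.wilfEq_of_F_eq
  rcases ha with rfl | ⟨c, rfl⟩
  · simp
  rcases hb with rfl | ⟨d, rfl⟩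
  · exact PF.F_arch_switch_nil c
  · exact PF.F_arch_switch_atom c d
end

section
/- If two plane forests A and B are isomorphic as non-plane (unordered) rooted forests, then the corresponding arch systems lie in the same cohort, i.e. A ∼ B under the equivalence relation generated by the rules: (1) A∼B implies arch(A)∼arch(B); (2) a∼b implies PaQ∼PbQ; (3) PabQ∼PbaQ; (4) a·arch(bc) ∼ arch(ab)·c, for atoms a,b,c (possibly empty) and arbitrary arch systems P,Q. -/
/-- Isomorphism of plane forests as non-plane (unordered) rooted forests:
generated by reordering the children at each node. -/
inductive ShapeEq : PF → PF → Prop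
  | refl (A : PF) : ShapeEq A A
  | symm {A B : PF} : ShapeEq A B → ShapeEq B A
  | trans {A B C : PF} : ShapeEq A B → ShapeEq B C → ShapeEq A C
  | node {c c' r r' : PF} : ShapeEq c c' → ShapeEq r r' →
      ShapeEq (PF.node c r) (PF.node c' r')
  | swap (c d r : PF) : ShapeEq (PF.node c (PF.node d r)) (PF.node d (PF.node c r))

lemma PF.node_append_s15 (c r q : PF) : PF.node c r ++ q = PF.node c (r ++ q) := rfl

lemma PF.nil_append_s15 (q : PF) : PF.nil ++ q = q := rfl

lemma PF.append_nil_s15 (a : PF) : a ++ PF.nil = a := by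
  induction a with
  | nil => rfl
  | node c r ihc ihr => rw [PF.node_append_s15, ihr]

lemma PF.append_assoc_s15 (a b c : PF) : a ++ b ++ c = a ++ (b ++ c) := by
  induction a with
  | nil => rfl
  | node x r ihx ihr => simp only [PF.node_append_s15, ihr]

lemma shapeEq_ctx {A B : PF} (h : ShapeEq A B) :
    ∀ P Q : PF, Sim (P ++ A ++ Q) (P ++ B ++ Q) := by
  induction h with
  | refl A => intro P Q; exact Sim.refl _
  | symm _ ih => intro P Q; exact Sim.symm (ih P Q)
  | trans _ _ ih1 ih2 => intro P Q; exact Sim.trans (ih1 P Q) (ih2 P Q)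
  | @node c c' r r' hc hr ihc ihr =>
      intro P Q
      have hcc : Sim c c' := by
        simpa [PF.append_nil_s15, PF.nil_append_s15] using ihc PF.nil PF.nil
      have h1 := ihr (P ++ PF.node c PF.nil) Q
      have h2 := Sim.subst (a := PF.node c PF.nil) (b := PF.node c' PF.nil)
        P (r' ++ Q) (Or.inr ⟨c, rfl⟩) (Or.inr ⟨c', rfl⟩) (Sim.arch hcc)
      simp only [PF.append_assoc_s15, PF.node_append_s15, PF.nil_append_s15] at h1 h2 ⊢
      exact h1.trans h2
  | swap c d r =>
      intro P Q
      have := Sim.comm (a := PF.node c PF.nil) (b := PF.node d PF.nil)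
        P (r ++ Q) (Or.inr ⟨c, rfl⟩) (Or.inr ⟨d, rfl⟩)
      simpa only [PF.append_assoc_s15, PF.node_append_s15, PF.nil_append_s15] using this

/-- If two plane forests are isomorphic as non-plane forests, then they lie in
the same cohort. -/
theorem shapeEq_implies_sim (A B : PF) (h : ShapeEq A B) : Sim A B := by
  simpa [PF.append_nil_s15, PF.nil_append_s15] using shapeEq_ctx h PF.nil PF.nil
end

section
/- Let M_n be the number of atoms of size n in the main cohort (the cohort of the nest N_n of n nested arches, for the appropriate size). Then the generating function M(t) = Σ M_n t^n satisfies M = t + tM + tM², so M_{n+1} is the n-th Motzkin number; consequently the number of arch systems in the main cohort of size n is the n-th Motzkin number. -/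
/-- The generating function counting atoms of each size in the main cohort. -/
noncomputable def Mgf : PowerSeries ℚ :=
  PowerSeries.mk fun n =>
    (Set.ncard {X : PF | X.IsAtom ∧ X.size = n ∧ Sim X (nest n)} : ℚ)

/-!
The relation `∼` preserves the size and the property of being a unary-binary forest (at most two
trees, every node with at most two children): every rule only moves whole atoms around, and a
rotation trades a top-level tree for a child of one atom. Conversely, a chain of rotations merges
two adjacent unary-binary atoms into a single one, so by induction on the size every unary-binary
forest is `∼` to the nest. Hence the main cohort of size `n` consists of the unary-binary forests
of size `n`. Splitting off the one or two trees gives the Motzkin recurrence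
`M (n + 2) = M (n + 1) + ∑_{i + j = n} M i * M j`, which the binomial–Catalan sum satisfies by
Pascal's rule, the upper Vandermonde identity and the Catalan convolution. The atoms of size
`n + 1` are the arches over forests of size `n`, so their series is `t * ∑ M n t ^ n`.
-/

namespace PF

@[simp] lemma size_nil : nil.size = 0 := rfl

@[simp] lemma size_node (c r : PF) : (node c r).size = c.size + r.size + 1 := by
  simp only [size]; omega

@[simp] lemma size_eq_zero {X : PF} : X.size = 0 ↔ X = nil := by
  cases X <;> simp

@[simp] lemma size_append (p q : PF) : (p ++ q).size = p.size + q.size := by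
  induction p with
  | nil => simp
  | node c r _ ih => simp [ih]; omega

def numTrees : PF → ℕ
  | nil => 0
  | node _ r => r.numTrees + 1

@[simp] lemma numTrees_nil : nil.numTrees = 0 := rfl

@[simp] lemma numTrees_node (c r : PF) : (node c r).numTrees = r.numTrees + 1 := rfl

@[simp] lemma numTrees_append (p q : PF) : (p ++ q).numTrees = p.numTrees + q.numTrees := by
  induction p with
  | nil => simp
  | node c r _ ih => simp [ih]; omega

def AtMostBinary : PF → Prop
  | nil => True
  | node c r => c.numTrees ≤ 2 ∧ c.AtMostBinary ∧ r.AtMostBinary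

@[simp] lemma atMostBinary_nil : nil.AtMostBinary := trivial

@[simp] lemma atMostBinary_node (c r : PF) :
    (node c r).AtMostBinary ↔ c.numTrees ≤ 2 ∧ c.AtMostBinary ∧ r.AtMostBinary := Iff.rfl

@[simp] lemma atMostBinary_append (p q : PF) :
    (p ++ q).AtMostBinary ↔ p.AtMostBinary ∧ q.AtMostBinary := by
  induction p with
  | nil => simp
  | node c r _ ih => simp [ih, and_assoc]

def IsUnaryBinary (X : PF) : Prop := X.numTrees ≤ 2 ∧ X.AtMostBinary

@[simp] lemma isUnaryBinary_nil : nil.IsUnaryBinary := by simp [IsUnaryBinary]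

@[simp] lemma isUnaryBinary_node_nil (c : PF) :
    (node c nil).IsUnaryBinary ↔ c.IsUnaryBinary := by
  simp [IsUnaryBinary]

@[simp] lemma isUnaryBinary_node_node_nil (c d : PF) :
    (node c (node d nil)).IsUnaryBinary ↔ c.IsUnaryBinary ∧ d.IsUnaryBinary := by
  simp [IsUnaryBinary]; tauto

lemma not_isUnaryBinary_node_node_node (c d e r : PF) :
    ¬ (node c (node d (node e r))).IsUnaryBinary := by
  simp [IsUnaryBinary]

lemma AtomOrNil.numTrees_eq {a : PF} (ha : a.AtomOrNil) : a.numTrees = min a.size 1 := by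
  rcases ha with rfl | ⟨c, rfl⟩ <;> simp

lemma AtomOrNil.numTrees_le_one {a : PF} (ha : a.AtomOrNil) : a.numTrees ≤ 1 :=
  ha.numTrees_eq ▸ min_le_right _ _

lemma AtomOrNil.isUnaryBinary_iff {a : PF} (ha : a.AtomOrNil) :
    a.IsUnaryBinary ↔ a.AtMostBinary := by
  simp [IsUnaryBinary, ha.numTrees_eq]

end PF

open PF

lemma Sim.size_eq {X Y : PF} (h : Sim X Y) : X.size = Y.size := by
  induction h with
  | refl | symm | trans | arch => simp_all
  | subst _ _ _ _ _ ih => simp [ih]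
  | comm | rot => simp; omega

lemma Sim.isUnaryBinary_iff {X Y : PF} (h : Sim X Y) : X.IsUnaryBinary ↔ Y.IsUnaryBinary := by
  induction h with
  | refl => rfl
  | symm _ ih => exact ih.symm
  | trans _ _ ih₁ ih₂ => exact ih₁.trans ih₂
  | arch _ ih => simpa using ih
  | subst P Q ha hb hab ih =>
    have hnum : _ = _ := congrArg (min · 1) hab.size_eq
    rw [← ha.numTrees_eq, ← hb.numTrees_eq] at hnum
    rw [ha.isUnaryBinary_iff, hb.isUnaryBinary_iff] at ih
    simp [IsUnaryBinary, hnum, ih]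
  | comm P Q ha hb =>
    simp only [IsUnaryBinary, numTrees_append, atMostBinary_append]
    constructor <;> rintro ⟨h₁, h₂⟩ <;> exact ⟨by omega, by tauto⟩
  | rot ha hb hc =>
    have := ha.numTrees_le_one
    have := hb.numTrees_le_one
    have := hc.numTrees_le_one
    simp only [IsUnaryBinary, numTrees_append, atMostBinary_append, atMostBinary_node,
      numTrees_node, numTrees_nil, atMostBinary_nil]
    grind

@[simp] lemma nest_succ (n : ℕ) : nest (n + 1) = node (nest n) nil := rfl

@[simp] lemma size_nest (n : ℕ) : (nest n).size = n := by
  induction n with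
  | zero => rfl
  | succ n ih => simp [ih]

lemma isUnaryBinary_nest (n : ℕ) : (nest n).IsUnaryBinary := by
  induction n with
  | zero => exact isUnaryBinary_nil
  | succ n ih => simpa using ih

/-- Each rotation moves the first child of `c` into the atom on the left; recurse on the second. -/
theorem exists_sim_append_node_nil (a : PF) (ha : a.AtomOrNil) :
    ∀ c : PF, c.IsUnaryBinary → ∃ Y, Sim (a ++ node c nil) (node Y nil)
  | nil, _ => ⟨a, by simpa using Sim.rot ha (Or.inl rfl) (Or.inl rfl)⟩
  | node e nil, _ =>
    ⟨a ++ node e nil, by simpa using Sim.rot ha (Or.inr ⟨e, rfl⟩) (Or.inl rfl)⟩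
  | node e (node f nil), hc => by
    obtain ⟨Y, hY⟩ := exists_sim_append_node_nil (node (a ++ node e nil) nil) (Or.inr ⟨_, rfl⟩)
      f ((isUnaryBinary_node_node_nil e f).mp hc).2
    exact ⟨Y, (Sim.rot ha (Or.inr ⟨e, rfl⟩) (Or.inr ⟨f, rfl⟩)).trans hY⟩
  | node _ (node _ (node _ _)), hc => absurd hc (not_isUnaryBinary_node_node_node _ _ _ _)

theorem sim_nest_of_isUnaryBinary (n : ℕ) :
    ∀ X : PF, X.IsUnaryBinary → X.size = n → Sim X (nest n) := by
  induction n using Nat.strong_induction_on with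
  | _ n ih =>
  rintro (_ | ⟨c, _ | ⟨d, _ | ⟨e, r⟩⟩⟩) hX rfl
  · exact Sim.refl nil
  · simpa using Sim.arch (ih c.size (by simp) c ((isUnaryBinary_node_nil c).mp hX) rfl)
  · obtain ⟨Y, hY⟩ := exists_sim_append_node_nil (node c nil) (Or.inr ⟨c, rfl⟩) d
      ((isUnaryBinary_node_node_nil c d).mp hX).2
    have hsize : (node c (node d nil)).size = Y.size + 1 := by simpa using hY.size_eq
    have hY' : Y.IsUnaryBinary := by simpa using hY.isUnaryBinary_iff.mp (by simpa using hX)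
    rw [hsize]
    exact hY.trans (Sim.arch (ih Y.size (by omega) Y hY' rfl))
  · exact absurd hX (not_isUnaryBinary_node_node_node _ _ _ _)

theorem sim_nest_iff {X : PF} {n : ℕ} : Sim X (nest n) ↔ X.IsUnaryBinary ∧ X.size = n :=
  ⟨fun h => ⟨h.isUnaryBinary_iff.mpr (isUnaryBinary_nest n), by simpa using h.size_eq⟩,
    fun h => sim_nest_of_isUnaryBinary n X h.1 h.2⟩

open Finset
open Finset.HasAntidiagonal.antidiagonal (fst_le snd_le)

theorem Nat.sum_antidiagonal_choose_mul_choose (a b m : ℕ) :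
    ∑ p ∈ antidiagonal m, p.1.choose a * p.2.choose b = (m + 1).choose (a + b + 1) := by
  induction m generalizing b with
  | zero => cases a <;> cases b <;> simp [Nat.choose_eq_zero_of_lt]
  | succ m ih =>
    rw [Nat.sum_antidiagonal_succ']
    cases b with
    | zero =>
      have := ih 0
      simp only [Nat.choose_zero_right, mul_one, add_zero] at this ⊢
      rw [this, Nat.choose_succ_succ' (m + 1) a]
    | succ b =>
      simp only [Nat.choose_succ_succ' _ b, mul_add, sum_add_distrib, ih]
      rw [show a + (b + 1) + 1 = a + b + 1 + 1 by omega, Nat.choose_succ_succ' (m + 1)]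
      simp

theorem Finset.sum_range_product_range_eq_sum_range_sum_antidiagonal {M : Type*}
    [AddCommMonoid M] {N : ℕ} {f : ℕ × ℕ → M} (hf : ∀ p : ℕ × ℕ, N ≤ p.1 + p.2 → f p = 0) :
    ∑ p ∈ range N ×ˢ range N, f p = ∑ s ∈ range N, ∑ p ∈ antidiagonal s, f p := by
  have hdisj : (range N : Set ℕ).PairwiseDisjoint antidiagonal := fun s _ t _ hst =>
    disjoint_left.2 fun p hs ht => hst <| by
      rw [← HasAntidiagonal.mem_antidiagonal.1 hs, ← HasAntidiagonal.mem_antidiagonal.1 ht]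
  rw [← sum_biUnion hdisj]
  refine (sum_subset (fun p => by simp; omega) fun p _ hp => hf p ?_).symm
  simp only [mem_biUnion, mem_range, HasAntidiagonal.mem_antidiagonal] at hp
  by_contra! h
  exact hp ⟨_, h, rfl⟩

lemma motzkin_eq_sum_range {n N : ℕ} (h : n < N) :
    motzkin n = ∑ k ∈ range N, n.choose (2 * k) * catalan k := by
  refine sum_subset (range_subset_range.2 (by omega)) fun k _ hk => ?_
  rw [Nat.choose_eq_zero_of_lt (by simp at hk; omega), zero_mul]

@[simp] lemma motzkin_zero : motzkin 0 = 1 := by simp [motzkin]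

@[simp] lemma motzkin_one : motzkin 1 = 1 := by simp [motzkin, sum_range_succ]

lemma motzkin_succ {n N : ℕ} (h : n < N) :
    motzkin (n + 1) = motzkin n + ∑ k ∈ range N, n.choose (2 * k + 1) * catalan (k + 1) := by
  rw [motzkin_eq_sum_range (n := n + 1) (N := N + 1) (by omega),
    motzkin_eq_sum_range (N := N + 1) (by omega), sum_range_succ', sum_range_succ']
  simp only [mul_add, Nat.choose_succ_succ', add_mul, sum_add_distrib, mul_zero,
    Nat.choose_zero_right]
  ring

lemma sum_antidiagonal_motzkin_mul {m N : ℕ} (h : m < N) :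
    ∑ p ∈ antidiagonal m, motzkin p.1 * motzkin p.2
      = ∑ s ∈ range N, (m + 1).choose (2 * s + 1) * catalan (s + 1) := by
  calc ∑ p ∈ antidiagonal m, motzkin p.1 * motzkin p.2
      = ∑ p ∈ antidiagonal m, ∑ q ∈ range N ×ˢ range N,
          p.1.choose (2 * q.1) * p.2.choose (2 * q.2) * (catalan q.1 * catalan q.2) := by
        refine sum_congr rfl fun p hp => ?_
        have := fst_le hp
        have := snd_le hp
        rw [motzkin_eq_sum_range (N := N) (by omega), motzkin_eq_sum_range (N := N) (by omega),
          sum_mul_sum, sum_product]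
        exact sum_congr rfl fun _ _ => sum_congr rfl fun _ _ => by ring
    _ = ∑ q ∈ range N ×ˢ range N, (m + 1).choose (2 * q.1 + 2 * q.2 + 1)
          * (catalan q.1 * catalan q.2) := by
        rw [sum_comm]
        simp only [← sum_mul, Nat.sum_antidiagonal_choose_mul_choose]
    _ = ∑ s ∈ range N, ∑ q ∈ antidiagonal s, (m + 1).choose (2 * s + 1)
          * (catalan q.1 * catalan q.2) := by
        rw [sum_range_product_range_eq_sum_range_sum_antidiagonal fun q hq =>
          by rw [Nat.choose_eq_zero_of_lt (by omega), zero_mul]]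
        refine sum_congr rfl fun s _ => sum_congr rfl fun q hq => ?_
        rw [← mul_add, ← HasAntidiagonal.mem_antidiagonal.1 hq]
    _ = _ := by simp only [← mul_sum, catalan_succ']

lemma motzkin_succ_succ (n : ℕ) :
    motzkin (n + 2) = motzkin (n + 1) + ∑ p ∈ antidiagonal n, motzkin p.1 * motzkin p.2 := by
  rw [motzkin_succ (N := n + 2) (by omega), sum_antidiagonal_motzkin_mul (N := n + 2) (by omega)]

namespace PF

def unaryBinaryForests : ℕ → Finset PF
  | 0 => {nil}
  | 1 => {node nil nil}
  | n + 2 =>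
    (unaryBinaryForests (n + 1)).image (node · nil) ∪
      (antidiagonal n).attach.biUnion fun p =>
        (unaryBinaryForests p.1.1 ×ˢ unaryBinaryForests p.1.2).image
          fun q => node q.1 (node q.2 nil)
  decreasing_by
    · omega
    · have := fst_le p.2; omega
    · have := snd_le p.2; omega

lemma unaryBinaryForests_succ_succ (n : ℕ) :
    unaryBinaryForests (n + 2) =
      (unaryBinaryForests (n + 1)).image (node · nil) ∪
        (antidiagonal n).biUnion fun p =>
          (unaryBinaryForests p.1 ×ˢ unaryBinaryForests p.2).image
            fun q => node q.1 (node q.2 nil) := by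
  rw [unaryBinaryForests]
  ext
  simp

lemma mem_unaryBinaryForests {n : ℕ} {X : PF} :
    X ∈ unaryBinaryForests n ↔ X.IsUnaryBinary ∧ X.size = n := by
  induction n using Nat.strong_induction_on generalizing X with
  | _ n ih =>
  rcases n with _ | _ | n
  · cases X <;> simp [unaryBinaryForests]
  · rcases X with _ | ⟨c, _ | ⟨d, r⟩⟩ <;> simp [unaryBinaryForests]
    rintro rfl
    exact isUnaryBinary_nil
  · rw [unaryBinaryForests_succ_succ]
    rcases X with _ | ⟨c, _ | ⟨d, _ | ⟨e, r⟩⟩⟩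
    · simp
    · simp [ih (n + 1) (by omega)]
    · simp only [mem_union, mem_image, mem_biUnion, mem_product, node.injEq, reduceCtorEq,
        and_false, exists_false, false_or, isUnaryBinary_node_node_nil, size_node, size_nil]
      constructor
      · rintro ⟨p, hp, ⟨c, d⟩, ⟨hc, hd⟩, rfl, rfl, -⟩
        rw [HasAntidiagonal.mem_antidiagonal] at hp
        rw [ih _ (by omega)] at hc hd
        exact ⟨⟨hc.1, hd.1⟩, by omega⟩
      · rintro ⟨⟨hc, hd⟩, hsize⟩
        exact ⟨(c.size, d.size), by simp; omega, (c, d), ⟨(ih _ (by omega)).2 ⟨hc, rfl⟩,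
          (ih _ (by omega)).2 ⟨hd, rfl⟩⟩, rfl, rfl, trivial⟩
    · simp [not_isUnaryBinary_node_node_node]

lemma card_unaryBinaryForests_succ_succ (n : ℕ) :
    #(unaryBinaryForests (n + 2)) = #(unaryBinaryForests (n + 1)) +
      ∑ p ∈ antidiagonal n, #(unaryBinaryForests p.1) * #(unaryBinaryForests p.2) := by
  have hinj₁ : Function.Injective (node · nil) := fun _ _ h => by injection h
  have hinj₂ : Function.Injective fun q : PF × PF => node q.1 (node q.2 nil) :=
    fun _ _ h => by injection h with h₁ h₂; injection h₂ with h₂; exact Prod.ext h₁ h₂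
  have hdisj : (antidiagonal n : Set (ℕ × ℕ)).PairwiseDisjoint fun p =>
      (unaryBinaryForests p.1 ×ˢ unaryBinaryForests p.2).image
        fun q => node q.1 (node q.2 nil) := by
    intro p _ p' _ hpp'
    simp only [Function.onFun, disjoint_left, mem_image, mem_product, mem_unaryBinaryForests]
    rintro _ ⟨q, ⟨⟨-, h₁⟩, ⟨-, h₂⟩⟩, rfl⟩ ⟨q', ⟨⟨-, h₁'⟩, ⟨-, h₂'⟩⟩, hq⟩
    obtain rfl := hinj₂ hq
    exact hpp' (Prod.ext (h₁.symm.trans h₁') (h₂.symm.trans h₂'))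
  rw [unaryBinaryForests_succ_succ, card_union_of_disjoint, card_image_of_injective _ hinj₁,
    card_biUnion hdisj]
  · simp only [card_image_of_injective _ hinj₂, card_product]
  · simp [disjoint_left]

theorem card_unaryBinaryForests (n : ℕ) : #(unaryBinaryForests n) = motzkin n := by
  induction n using Nat.strong_induction_on with
  | _ n ih =>
  rcases n with _ | _ | n
  · simp [unaryBinaryForests]
  · simp [unaryBinaryForests]
  · rw [card_unaryBinaryForests_succ_succ, motzkin_succ_succ, ih (n + 1) (by omega)]
    congr 1
    exact sum_congr rfl fun p hp => by rw [ih p.1 (by have := fst_le hp; omega),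
      ih p.2 (by have := snd_le hp; omega)]

end PF

theorem ncard_main_cohort (n : ℕ) : {X : PF | X.size = n ∧ Sim X (nest n)}.ncard = motzkin n := by
  have : {X : PF | X.size = n ∧ Sim X (nest n)} = unaryBinaryForests n := by
    ext X
    simp [sim_nest_iff, mem_unaryBinaryForests]
  rw [this, Set.ncard_coe_finset, card_unaryBinaryForests]

theorem ncard_main_cohort_atoms (n : ℕ) :
    {X : PF | X.IsAtom ∧ X.size = n + 1 ∧ Sim X (nest (n + 1))}.ncard = motzkin n := by
  have : {X : PF | X.IsAtom ∧ X.size = n + 1 ∧ Sim X (nest (n + 1))}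
      = (node · nil) '' {X : PF | X.size = n ∧ Sim X (nest n)} := by
    ext X
    simp only [Set.mem_image, sim_nest_iff]
    constructor
    · rintro ⟨⟨c, rfl⟩, -, hc, hsize⟩
      exact ⟨c, by simp_all⟩
    · rintro ⟨c, ⟨hsize, hc, -⟩, rfl⟩
      exact ⟨⟨c, rfl⟩, by simp_all⟩
  rw [this, Set.ncard_image_of_injective _ fun _ _ h => by injection h, ncard_main_cohort]

noncomputable def motzkinSeries : PowerSeries ℚ := PowerSeries.mk fun n => (motzkin n : ℚ)

open PowerSeries

theorem motzkinSeries_eq :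
    motzkinSeries = 1 + X * motzkinSeries + X ^ 2 * motzkinSeries ^ 2 := by
  ext (_ | _ | n)
  · simp [motzkinSeries]
  · simp [motzkinSeries, coeff_X_pow_mul']
  · rw [map_add, map_add, coeff_succ_X_mul, show n + 1 + 1 = n + 2 from rfl, coeff_X_pow_mul,
      coeff_one]
    simp [motzkinSeries, sq, coeff_mul, motzkin_succ_succ]

theorem Mgf_eq_X_mul_motzkinSeries : Mgf = X * motzkinSeries := by
  ext (_ | n)
  · have : {X : PF | X.IsAtom ∧ X.size = 0 ∧ Sim X (nest 0)} = ∅ :=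
      Set.eq_empty_of_forall_notMem fun X ⟨⟨c, hc⟩, hsize, _⟩ => by simp [hc] at hsize
    rw [Mgf, coeff_mk, this, Set.ncard_empty, coeff_zero_X_mul, Nat.cast_zero]
  · rw [coeff_succ_X_mul, Mgf, motzkinSeries, coeff_mk, coeff_mk, ncard_main_cohort_atoms]

/-- `M = t + tM + tM²`, so the number of atoms of size `n+1` in the main cohort is
the `n`-th Motzkin number, and consequently the number of arch systems in the
main cohort of size `n` is the `n`-th Motzkin number. -/
theorem main_cohort_motzkin :
    Mgf = PowerSeries.X + PowerSeries.X * Mgf + PowerSeries.X * Mgf ^ 2 ∧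
    (∀ n : ℕ, Set.ncard {X : PF | X.IsAtom ∧ X.size = n + 1 ∧ Sim X (nest (n + 1))}
        = motzkin n) ∧
    (∀ n : ℕ, Set.ncard {X : PF | X.size = n ∧ Sim X (nest n)} = motzkin n) := by
  refine ⟨?_, ncard_main_cohort_atoms, ncard_main_cohort⟩
  rw [Mgf_eq_X_mul_motzkinSeries]
  linear_combination X * motzkinSeries_eq
end
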